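/- arXiv:math/0404304 — 5 statements merged into one kernel-verified Lean document; each statement's English description precedes it below -/
import Mathlib

section
/- In the upper half-plane ℍ² = { x ∈ ℝ² : x₂ > 0 } with hyperbolic metric ρ, define ρ₀(x,y) := max_{i=1,2} log(1 + |x_i - y_i| / min(x₂, y₂)). Then for all x, y ∈ ℍ², ρ(x,y) ≤ 4 ρ₀(x,y). -/
/-- In the upper half-plane with hyperbolic metric `ρ` (characterized by
`cosh ρ(x,y) = 1 + |x-y|²/(2 x₂ y₂)` with the Euclidean norm `|·|`), one has
`ρ(x,y) ≤ 4 ρ₀(x,y)` where `ρ₀(x,y) = max_i log(1 + |xᵢ-yᵢ|/min(x₂,y₂))`. -/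
theorem stmt_4 (x y : ℝ × ℝ) (hx : 0 < x.2) (hy : 0 < y.2) (r : ℝ) (hr : 0 ≤ r)
    (hcosh : Real.cosh r = 1 + ((x.1 - y.1) ^ 2 + (x.2 - y.2) ^ 2) / (2 * x.2 * y.2)) :
    r ≤ 4 * max (Real.log (1 + |x.1 - y.1| / min x.2 y.2))
          (Real.log (1 + |x.2 - y.2| / min x.2 y.2)) := by
  set m : ℝ := min x.2 y.2 with hmdef
  have hm : 0 < m := lt_min hx hy
  set a : ℝ := |x.1 - y.1| with hadef
  set b : ℝ := |x.2 - y.2| with hbdef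
  have ha : 0 ≤ a := abs_nonneg _
  have hb : 0 ≤ b := abs_nonneg _
  set M : ℝ := max a b with hMdef
  have hM : 0 ≤ M := le_trans ha (le_max_left _ _)
  set t : ℝ := M / m with htdef
  have ht : 0 ≤ t := div_nonneg hM hm.le
  -- RHS equals 4 * log (1 + t)
  have hmax : max (Real.log (1 + a / m)) (Real.log (1 + b / m)) = Real.log (1 + t) := by
    rcases le_total a b with h | h
    · rw [htdef, hMdef, max_eq_right h, max_eq_right]
      exact Real.log_le_log (by positivity) (by gcongr)
    · rw [htdef, hMdef, max_eq_left h, max_eq_left]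
      exact Real.log_le_log (by positivity) (by gcongr)
  rw [hmax]
  have h1t : (0:ℝ) < 1 + t := by linarith
  have hL : 0 ≤ Real.log (1 + t) := Real.log_nonneg (by linarith)
  have hu : (0:ℝ) < (1 + t) ^ 4 := by positivity
  have hcosh4 : Real.cosh (4 * Real.log (1 + t))
      = ((1 + t) ^ 4 + ((1 + t) ^ 4)⁻¹) / 2 := by
    have h4 : (4:ℝ) * Real.log (1 + t) = Real.log ((1 + t) ^ 4) := by
      rw [Real.log_pow]; push_cast; ring
    rw [h4, Real.cosh_eq, Real.exp_log (by positivity), Real.exp_neg,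
      Real.exp_log (by positivity)]
  -- bound cosh r ≤ 1 + t^2
  have hab : a ^ 2 + b ^ 2 ≤ 2 * M ^ 2 := by
    have h1 : a ≤ M := le_max_left _ _
    have h2 : b ≤ M := le_max_right _ _
    nlinarith
  have hxy : m ^ 2 ≤ x.2 * y.2 := by
    have h1 : m ≤ x.2 := min_le_left _ _
    have h2 : m ≤ y.2 := min_le_right _ _
    nlinarith
  have hstep : Real.cosh r ≤ 1 + t ^ 2 := by
    rw [hcosh, ← sq_abs (x.1 - y.1), ← sq_abs (x.2 - y.2), ← hadef, ← hbdef]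
    have hdiv : (a ^ 2 + b ^ 2) / (2 * x.2 * y.2) ≤ 2 * M ^ 2 / (2 * m ^ 2) := by
      apply div_le_div₀ (by positivity) hab (by positivity)
      nlinarith
    have heq : 2 * M ^ 2 / (2 * m ^ 2) = t ^ 2 := by
      rw [htdef, div_pow]; field_simp
    linarith [hdiv.trans_eq heq]
  -- polynomial inequality: 1 + t^2 ≤ cosh (4 log (1+t))
  have key : 0 ≤ (1 + t) ^ 8 + 1 - (1 + t ^ 2) * 2 * (1 + t) ^ 4 := by
    have hexp : (1 + t) ^ 8 + 1 - (1 + t ^ 2) * 2 * (1 + t) ^ 4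
        = 14 * t ^ 2 + 40 * t ^ 3 + 56 * t ^ 4 + 48 * t ^ 5 + 26 * t ^ 6
          + 8 * t ^ 7 + t ^ 8 := by ring
    rw [hexp]; positivity
  have hpoly : 1 + t ^ 2 ≤ ((1 + t) ^ 4 + ((1 + t) ^ 4)⁻¹) / 2 := by
    rw [le_div_iff₀ (by norm_num : (0:ℝ) < 2), ← sub_nonneg]
    have hmul : ((1 + t) ^ 4 + ((1 + t) ^ 4)⁻¹ - (1 + t ^ 2) * 2) * (1 + t) ^ 4
        = (1 + t) ^ 8 + 1 - (1 + t ^ 2) * 2 * (1 + t) ^ 4 := by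
      field_simp
    have h0 : 0 ≤ ((1 + t) ^ 4 + ((1 + t) ^ 4)⁻¹ - (1 + t ^ 2) * 2) * (1 + t) ^ 4 :=
      hmul ▸ key
    exact nonneg_of_mul_nonneg_right (by linarith [h0] : 0 ≤ (1 + t) ^ 4 * ((1 + t) ^ 4 + ((1 + t) ^ 4)⁻¹ - (1 + t ^ 2) * 2)) hu
  have hle : Real.cosh r ≤ Real.cosh (4 * Real.log (1 + t)) := by
    rw [hcosh4]; linarith
  have habs := (Real.cosh_le_cosh).mp hle
  rwa [abs_of_nonneg hr, abs_of_nonneg (by linarith)] at habs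
end

section
/- In the upper half-plane ℍ² with hyperbolic metric ρ and with ρ₀(x,y) := max_{i=1,2} log(1 + |x_i - y_i| / min(x₂, y₂)), if |x - y| ≥ (1/2) min(x₂, y₂) then ρ(x,y) ≥ (1/8) ρ₀(x,y). -/
/-- In the upper half-plane with hyperbolic metric `ρ` (characterized by
`cosh ρ(x,y) = 1 + |x-y|²/(2 x₂ y₂)`), if the Euclidean distance satisfies
`|x - y| ≥ (1/2) min(x₂,y₂)` then `ρ(x,y) ≥ (1/8) ρ₀(x,y)` where
`ρ₀(x,y) = max_i log(1 + |xᵢ-yᵢ|/min(x₂,y₂))`. -/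
theorem stmt_5 (x y : ℝ × ℝ) (hx : 0 < x.2) (hy : 0 < y.2) (r : ℝ) (hr : 0 ≤ r)
    (hcosh : Real.cosh r = 1 + ((x.1 - y.1) ^ 2 + (x.2 - y.2) ^ 2) / (2 * x.2 * y.2))
    (hfar : (1 / 2) * min x.2 y.2 ≤ Real.sqrt ((x.1 - y.1) ^ 2 + (x.2 - y.2) ^ 2)) :
    (1 / 8) * max (Real.log (1 + |x.1 - y.1| / min x.2 y.2))
        (Real.log (1 + |x.2 - y.2| / min x.2 y.2)) ≤ r := by
  set m := min x.2 y.2 with hm_def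
  have hm : 0 < m := lt_min hx hy
  set S := (x.1 - y.1) ^ 2 + (x.2 - y.2) ^ 2 with hS_def
  have hS0 : 0 ≤ S := by positivity
  set D := Real.sqrt S with hD_def
  have hD0 : 0 ≤ D := Real.sqrt_nonneg _
  have hDm : m / 2 ≤ D := by linarith
  have hDpos : 0 < D := by linarith
  have hD2 : D ^ 2 = S := Real.sq_sqrt hS0
  have h1 : |x.1 - y.1| ≤ D := by
    rw [← Real.sqrt_sq_eq_abs]
    exact Real.sqrt_le_sqrt (by nlinarith [sq_nonneg (x.2 - y.2)])
  have h2 : |x.2 - y.2| ≤ D := by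
    rw [← Real.sqrt_sq_eq_abs]
    exact Real.sqrt_le_sqrt (by nlinarith [sq_nonneg (x.1 - y.1)])
  clear_value S D
  have hmax : max x.2 y.2 ≤ m + D := by
    have hd := abs_le.mp h2
    rcases le_total x.2 y.2 with h | h
    · rw [max_eq_right h]
      have hmin : m = x.2 := min_eq_left h
      linarith [hd.1]
    · rw [max_eq_left h]
      have hmin : m = y.2 := min_eq_right h
      linarith [hd.2]
  have hmul : x.2 * y.2 ≤ m * (m + D) := by
    have h := min_mul_max x.2 y.2
    nlinarith [le_max_left x.2 y.2, le_max_right x.2 y.2]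
  set u := S / (2 * (m * (m + D))) with hu_def
  have hu0 : 0 ≤ u := by positivity
  have hcosh2 : 1 + u ≤ Real.cosh r := by
    rw [hcosh]
    have : u ≤ S / (2 * x.2 * y.2) := by
      apply div_le_div_of_nonneg_left hS0 (by positivity)
      nlinarith
    linarith
  have hexp : Real.cosh r ≤ Real.exp r := by
    rw [Real.cosh_eq]
    have : Real.exp (-r) ≤ Real.exp r := Real.exp_le_exp.mpr (by linarith)
    linarith
  have h8u : 1 + 8 * u ≤ (1 + u) ^ 8 := by
    have := one_add_mul_le_pow (a := u) (by linarith) 8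
    push_cast at this
    linarith
  have hkey : 1 + D / m ≤ (1 + u) ^ 8 := by
    have hDu : D / m ≤ 8 * u := by
      have hu_eq : 8 * u = 4 * D ^ 2 / (m * (m + D)) := by
        rw [hu_def, ← hD2]; field_simp; ring
      rw [hu_eq, div_le_div_iff₀ hm (by positivity)]
      nlinarith [mul_nonneg (mul_nonneg hD0 hm.le) (by linarith : (0:ℝ) ≤ 3 * D - m)]
    linarith
  have hfin : Real.log (1 + D / m) ≤ 8 * r := by
    rw [Real.log_le_iff_le_exp (by positivity)]
    have e1 : (1 + u) ^ 8 ≤ Real.exp r ^ 8 :=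
      pow_le_pow_left₀ (by linarith) (le_trans hcosh2 hexp) 8
    have e2 : Real.exp r ^ 8 = Real.exp (8 * r) := by
      rw [← Real.exp_nat_mul]; norm_num
    linarith [hkey.trans (e1.trans_eq e2)]
  have la : Real.log (1 + |x.1 - y.1| / m) ≤ Real.log (1 + D / m) := by
    apply Real.log_le_log (by positivity)
    gcongr
  have lb : Real.log (1 + |x.2 - y.2| / m) ≤ Real.log (1 + D / m) := by
    apply Real.log_le_log (by positivity)
    gcongr
  have := max_le la lb
  linarith [this.trans hfin]
end

section
/- For 1 ≤ p ≤ ∞ and every convex subset C of ℓ_pⁿ containing 0, there exists a linear extension operator E : Lip₀(C) → Lip₀(ℓ_pⁿ) with ‖E‖ ≤ n^{|1/p - 1/2|}. In other words, λ_conv(ℓ_pⁿ) ≤ n^{|1/p - 1/2|}. -/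
open Filter Finset Topology WithLp
open scoped NNReal ENNReal InnerProductSpace

/-! Write `T : ℓ_pⁿ → ℓ_2ⁿ` for the identity map. It is `a`-Lipschitz and `b`-antilipschitz with
`b * a = n ^ |1/p - 1/2|`, one of the two constants being `1`. The nearest-point map `P` onto the
closed convex set `closure (T '' C)` is `1`-Lipschitz. A `K`-Lipschitz `f` on `C` factors as
`f = G ∘ T` with `G` a `K * b`-Lipschitz function on `ℓ_2ⁿ` (McShane), and `G ∘ P ∘ T` is the
required extension. As `G` depends nonlinearly on `f`, the operator itself is
`E f x := L_x f`, where `L_x` is a linear functional extending the limit along `T c → P (T x)`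
(`c ∈ C`); for Lipschitz `f` that limit is `G (P (T x))`. -/

namespace NNReal

variable {ι : Type*} (s : Finset ι) (f : ι → ℝ≥0) {p q : ℝ}

theorem le_sum_rpow_one_div (hp : 0 < p) {i : ι} (hi : i ∈ s) :
    f i ≤ (∑ j ∈ s, f j ^ p) ^ (1 / p) :=
  calc f i = (f i ^ p) ^ (1 / p) := by rw [← rpow_mul, mul_one_div_cancel hp.ne', rpow_one]
    _ ≤ _ := by gcongr; exact single_le_sum (fun j _ => zero_le) hi (f := fun j => f j ^ p)

theorem sum_rpow_one_div_le_of_le (hp : 0 < p) (hpq : p ≤ q) :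
    (∑ i ∈ s, f i ^ q) ^ (1 / q) ≤ (∑ i ∈ s, f i ^ p) ^ (1 / p) := by
  have hq : 0 < q := hp.trans_le hpq
  set S := (∑ i ∈ s, f i ^ p) ^ (1 / p)
  have hsplit : ∀ x : ℝ≥0, x ^ q = x ^ p * x ^ (q - p) := fun x => by
    rw [← rpow_add' (by linarith), add_sub_cancel]
  have hSp : S ^ p = ∑ i ∈ s, f i ^ p := by
    rw [← rpow_mul, one_div_mul_cancel hp.ne', rpow_one]
  have hsum : ∑ i ∈ s, f i ^ q ≤ S ^ q :=
    calc ∑ i ∈ s, f i ^ q = ∑ i ∈ s, f i ^ p * f i ^ (q - p) := by simp_rw [hsplit]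
      _ ≤ ∑ i ∈ s, f i ^ p * S ^ (q - p) := by
        gcongr with i hi
        exact le_sum_rpow_one_div s f hp hi
      _ = S ^ q := by rw [← sum_mul, ← hSp, ← hsplit]
  calc (∑ i ∈ s, f i ^ q) ^ (1 / q) ≤ (S ^ q) ^ (1 / q) := by gcongr
    _ = S := by rw [← rpow_mul, mul_one_div_cancel hq.ne', rpow_one]

theorem sum_rpow_one_div_le_card_rpow_mul (hp : 0 < p) (hpq : p ≤ q) :
    (∑ i ∈ s, f i ^ p) ^ (1 / p) ≤ (#s : ℝ≥0) ^ (1 / p - 1 / q) * (∑ i ∈ s, f i ^ q) ^ (1 / q) := by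
  have hq : 0 < q := hp.trans_le hpq
  have hpow : ∀ x : ℝ≥0, (x ^ p) ^ (q / p) = x ^ q := fun x => by
    rw [← rpow_mul, mul_div_cancel₀ _ hp.ne']
  have H := rpow_sum_le_const_mul_sum_rpow s (fun i => f i ^ p) ((one_le_div hp).2 hpq)
  simp only [hpow] at H
  calc (∑ i ∈ s, f i ^ p) ^ (1 / p) = ((∑ i ∈ s, f i ^ p) ^ (q / p)) ^ (1 / q) := by
        rw [← rpow_mul]; congr 1; field_simp
    _ ≤ ((#s : ℝ≥0) ^ (q / p - 1) * ∑ i ∈ s, f i ^ q) ^ (1 / q) := by gcongr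
    _ = _ := by rw [mul_rpow, ← rpow_mul]; congr 2; field_simp

end NNReal

theorem ENNReal.one_div_toReal_le_of_le {p q : ℝ≥0∞} (hp : p ≠ 0) (hpq : p ≤ q) :
    1 / q.toReal ≤ 1 / p.toReal := by
  rcases eq_or_ne q ∞ with rfl | hq
  · rw [toReal_top, _root_.div_zero]
    positivity
  exact one_div_le_one_div_of_le (toReal_pos hp (ne_top_of_le_ne_top hq hpq)) (toReal_mono hq hpq)

namespace PiLp

variable {ι : Type*} [Fintype ι] (β : ι → Type*) [∀ i, PseudoMetricSpace (β i)]
  {p q : ℝ≥0∞} [Fact (1 ≤ p)] [Fact (1 ≤ q)]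

theorem lipschitzWith_toLp_ofLp_of_le (hpq : p ≤ q) :
    LipschitzWith 1 (fun x : PiLp p β => toLp q (ofLp x)) := by
  rcases eq_or_ne q ∞ with rfl | hq
  · simpa [Function.comp_def] using (lipschitzWith_toLp ∞ β).comp (lipschitzWith_ofLp p β)
  have hp : p ≠ ∞ := ne_top_of_le_ne_top hq hpq
  have hp0 : 0 < p.toReal := ENNReal.toReal_pos (zero_lt_one.trans_le Fact.out).ne' hp
  refine LipschitzWith.mk_one fun x y => ?_
  rw [dist_nndist, dist_nndist, NNReal.coe_le_coe, nndist_eq_sum hp, nndist_eq_sum hq]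
  exact NNReal.sum_rpow_one_div_le_of_le univ (fun i => nndist (x i) (y i)) hp0
    (ENNReal.toReal_mono hq hpq)

theorem antilipschitzWith_toLp_ofLp_of_le (hpq : p ≤ q) :
    AntilipschitzWith ((Fintype.card ι : ℝ≥0) ^ (1 / p.toReal - 1 / q.toReal))
      (fun x : PiLp p β => toLp q (ofLp x)) := by
  rcases eq_or_ne q ∞ with rfl | hq
  · simpa [Function.comp_def, ENNReal.toReal_div] using
      (antilipschitzWith_toLp ∞ β).comp (antilipschitzWith_ofLp p β)
  have hp : p ≠ ∞ := ne_top_of_le_ne_top hq hpq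
  have hp0 : 0 < p.toReal := ENNReal.toReal_pos (zero_lt_one.trans_le Fact.out).ne' hp
  refine AntilipschitzWith.of_le_mul_nndist fun x y => ?_
  rw [nndist_eq_sum hp, nndist_eq_sum hq]
  simpa using NNReal.sum_rpow_one_div_le_card_rpow_mul univ (fun i => nndist (x i) (y i)) hp0
    (ENNReal.toReal_mono hq hpq)

variable (p q) in
theorem exists_lipschitzWith_antilipschitzWith_toLp_ofLp :
    ∃ a b : ℝ≥0, LipschitzWith a (fun x : PiLp p β => toLp q (ofLp x)) ∧
      AntilipschitzWith b (fun x : PiLp p β => toLp q (ofLp x)) ∧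
      b * a = (Fintype.card ι : ℝ≥0) ^ |1 / p.toReal - 1 / q.toReal| := by
  have hp0 : p ≠ 0 := (zero_lt_one.trans_le Fact.out).ne'
  have hq0 : q ≠ 0 := (zero_lt_one.trans_le Fact.out).ne'
  rcases le_total p q with hpq | hqp
  · refine ⟨1, _, lipschitzWith_toLp_ofLp_of_le β hpq, antilipschitzWith_toLp_ofLp_of_le β hpq, ?_⟩
    rw [mul_one, abs_of_nonneg (sub_nonneg.2 (ENNReal.one_div_toReal_le_of_le hp0 hpq))]
  · have hinv : Function.RightInverse (fun x : PiLp p β => toLp q (ofLp x))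
        (fun y : PiLp q β => toLp p (ofLp y)) := fun _ => rfl
    refine ⟨_, 1, (antilipschitzWith_toLp_ofLp_of_le β hqp).to_rightInverse hinv,
      (lipschitzWith_toLp_ofLp_of_le β hqp).to_rightInverse hinv, ?_⟩
    rw [one_mul, abs_of_nonpos (sub_nonpos.2 (ENNReal.one_div_toReal_le_of_le hq0 hqp)), neg_sub]

end PiLp

theorem Filter.exists_linearMap_eq_of_tendsto {α 𝕜 E : Type*} [Field 𝕜] [AddCommGroup E]
    [Module 𝕜 E] [TopologicalSpace E] [T2Space E] [ContinuousAdd E] [ContinuousConstSMul 𝕜 E]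
    (l : Filter α) [l.NeBot] :
    ∃ L : (α → E) →ₗ[𝕜] E, ∀ u a, Tendsto u l (𝓝 a) → L u = a := by
  let S : Submodule 𝕜 (α → E) :=
    { carrier := {u | ∃ a, Tendsto u l (𝓝 a)}
      add_mem' := fun ⟨a, ha⟩ ⟨b, hb⟩ => ⟨a + b, ha.add hb⟩
      zero_mem' := ⟨0, tendsto_const_nhds⟩
      smul_mem' := fun c _ ⟨a, ha⟩ => ⟨c • a, ha.const_smul c⟩ }
  have hlim : ∀ u : S, Tendsto (u : α → E) l (𝓝 (limUnder l u)) := fun u => tendsto_nhds_limUnder u.2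
  let lim : S →ₗ[𝕜] E :=
    { toFun := fun u => limUnder l u
      map_add' := fun u v => tendsto_nhds_unique (hlim (u + v)) ((hlim u).add (hlim v))
      map_smul' := fun c u => tendsto_nhds_unique (hlim (c • u)) ((hlim u).const_smul c) }
  obtain ⟨L, hL⟩ := LinearMap.exists_extend lim
  refine ⟨L, fun u a hu => ?_⟩
  exact (LinearMap.congr_fun hL ⟨u, a, hu⟩).trans (tendsto_nhds_unique (hlim ⟨u, a, hu⟩) hu)

section Retraction

variable {F : Type*} [NormedAddCommGroup F] [InnerProductSpace ℝ F]

theorem norm_sub_le_of_inner_le_zero {u v x y : F} (hx : ⟪u - x, y - x⟫_ℝ ≤ 0)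
    (hy : ⟪v - y, x - y⟫_ℝ ≤ 0) : ‖x - y‖ ≤ ‖u - v‖ := by
  have h : ‖x - y‖ * ‖x - y‖ ≤ ‖u - v‖ * ‖x - y‖ :=
    calc ‖x - y‖ * ‖x - y‖ = ⟪x - y, x - y⟫_ℝ := (real_inner_self_eq_norm_mul_norm _).symm
      _ ≤ ⟪x - y, x - y⟫_ℝ - ⟪u - x, y - x⟫_ℝ - ⟪v - y, x - y⟫_ℝ := by linarith
      _ = ⟪u - v, x - y⟫_ℝ := by
        simp only [inner_sub_left, inner_sub_right, real_inner_comm]; ring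
      _ ≤ ‖u - v‖ * ‖x - y‖ := real_inner_le_norm _ _
  rcases (norm_nonneg (x - y)).eq_or_lt with h0 | h0
  · rw [← h0]; positivity
  · exact le_of_mul_le_mul_right h h0

theorem Convex.exists_retraction_lipschitzWith_one {D : Set F} (hD : Convex ℝ D)
    (hne : D.Nonempty) (hc : IsComplete D) :
    ∃ P : F → F, (∀ u, P u ∈ D) ∧ (∀ u ∈ D, P u = u) ∧ LipschitzWith 1 P := by
  choose P hPD hPmin using exists_norm_eq_iInf_of_complete_convex hne hc hD
  have hvar : ∀ u, ∀ w ∈ D, ⟪u - P u, w - P u⟫_ℝ ≤ 0 := fun u =>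
    (norm_eq_iInf_iff_real_inner_le_zero hD (hPD u)).1 (hPmin u)
  refine ⟨P, hPD, fun u hu => ?_, LipschitzWith.mk_one fun u v => ?_⟩
  · exact (sub_eq_zero.1 (real_inner_self_nonpos.1 (hvar u u hu))).symm
  · rw [dist_eq_norm, dist_eq_norm]
    exact norm_sub_le_of_inner_le_zero (hvar u _ (hPD v)) (hvar v _ (hPD u))

end Retraction

theorem AntilipschitzWith.exists_lipschitzWith_comp_eq {X Y : Type*} [PseudoMetricSpace X]
    [PseudoMetricSpace Y] {T : X → Y} {b K : ℝ≥0} (hT : AntilipschitzWith b T) {C : Set X}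
    {f : C → ℝ} (hf : LipschitzWith K f) :
    ∃ G : Y → ℝ, LipschitzWith (K * b) G ∧ ∀ c : C, G (T c) = f c := by
  have key : ∀ c c' : C, dist (f c) (f c') ≤ K * b * dist (T c) (T c') := fun c c' =>
    calc dist (f c) (f c') ≤ K * dist c c' := hf.dist_le_mul c c'
      _ ≤ K * (b * dist (T c) (T c')) := by gcongr; exact hT.le_mul_dist c c'
      _ = K * b * dist (T c) (T c') := by ring
  classical
  -- by `key`, `f` is constant on the fibres of `T`, so the choice of preimage is immaterial
  let F : Y → ℝ := fun y => if h : ∃ c : C, T c = y then f h.choose else 0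
  have hF : ∀ c : C, ∃ c' : C, T c' = T c ∧ F (T c) = f c' := fun c =>
    have h : ∃ c' : C, T c' = T c := ⟨c, rfl⟩
    ⟨h.choose, h.choose_spec, dif_pos h⟩
  have hFlip : LipschitzOnWith (K * b) F (Set.range fun c : C => T c) := by
    refine LipschitzOnWith.of_dist_le_mul ?_
    rintro _ ⟨c, rfl⟩ _ ⟨c', rfl⟩
    obtain ⟨d, hd, hFd⟩ := hF c
    obtain ⟨d', hd', hFd'⟩ := hF c'
    simpa only [hFd, hFd', hd, hd', NNReal.coe_mul] using key d d'
  obtain ⟨G, hG, hFG⟩ := hFlip.extend_real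
  refine ⟨G, hG, fun c => ?_⟩
  obtain ⟨d, hd, hFd⟩ := hF c
  rw [← hFG ⟨c, rfl⟩, hFd]
  simpa [hd] using key d c

theorem exists_linearMap_extension_of_antilipschitzWith {X H : Type*} [PseudoMetricSpace X]
    [NormedAddCommGroup H] [InnerProductSpace ℝ H] [CompleteSpace H] {T : X → H} {a b : ℝ≥0}
    (hTa : LipschitzWith a T) (hTb : AntilipschitzWith b T) {C : Set X}
    (hC : Convex ℝ (T '' C)) (hne : C.Nonempty) :
    ∃ E : (C → ℝ) →ₗ[ℝ] (X → ℝ), ∀ (f : C → ℝ) (K : ℝ≥0), LipschitzWith K f →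
      (∀ c : C, E f c = f c) ∧ LipschitzWith (K * b * a) (E f) := by
  obtain ⟨P, hPD, hPfix, hP⟩ := hC.closure.exists_retraction_lipschitzWith_one
    (hne.image T).closure isClosed_closure.isComplete
  have hbot : ∀ x, (comap (fun c : C => T c) (𝓝 (P (T x)))).NeBot := fun x => by
    rw [comap_neBot_iff_frequently, ← Set.image_eq_range, ← mem_closure_iff_frequently]
    exact hPD (T x)
  choose L hL using fun x => haveI := hbot x
    (comap (fun c : C => T c) (𝓝 (P (T x)))).exists_linearMap_eq_of_tendsto (𝕜 := ℝ) (E := ℝ)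
  refine ⟨LinearMap.pi L, fun f K hf => ?_⟩
  obtain ⟨G, hG, hGf⟩ := hTb.exists_lipschitzWith_comp_eq hf
  have hE : LinearMap.pi L f = G ∘ P ∘ T := funext fun x => hL x f _ <| by
    rw [show f = G ∘ fun c : C => T c from funext fun c => (hGf c).symm]
    exact (hG.continuous.tendsto _).comp tendsto_comap
  refine ⟨fun c => ?_, ?_⟩
  · rw [hE, Function.comp_apply, Function.comp_apply,
      hPfix _ (subset_closure (Set.mem_image_of_mem T c.2)), hGf]
  · simpa [hE] using hG.comp (hP.comp hTa)

/-- `λ_conv(ℓ_pⁿ) ≤ n^{|1/p - 1/2|}`: for every convex subset `C ∋ 0` of `ℓ_pⁿ` there is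
a linear extension operator `E : Lip₀(C) → Lip₀(ℓ_pⁿ)` of norm at most
`n^{|1/p - 1/2|}`.  (For `p = ∞` one has `p.toReal = 0` and `1/p.toReal = 0`, so the
exponent is `1/2`, as it should be.) -/
theorem stmt_9 {n : ℕ} (p : ENNReal) [Fact (1 ≤ p)]
    (C : Set (PiLp p fun _ : Fin n => ℝ)) (hconv : Convex ℝ C)
    (h0 : (0 : PiLp p fun _ : Fin n => ℝ) ∈ C) :
    ∃ E : (↥C → ℝ) →ₗ[ℝ] ((PiLp p fun _ : Fin n => ℝ) → ℝ),
      ∀ (f : ↥C → ℝ) (K : NNReal), LipschitzWith K f → f ⟨0, h0⟩ = 0 →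
        (∀ x : ↥C, E f (x : PiLp p fun _ : Fin n => ℝ) = f x) ∧
        E f 0 = 0 ∧
        ∀ x y : PiLp p fun _ : Fin n => ℝ,
          |E f x - E f y| ≤ (K : ℝ) * (n : ℝ) ^ |1 / p.toReal - 1 / 2| * dist x y := by
  obtain ⟨a, b, hTa, hTb, hba⟩ :=
    PiLp.exists_lipschitzWith_antilipschitzWith_toLp_ofLp (fun _ : Fin n => ℝ) p 2
  have hTC : Convex ℝ ((fun x : PiLp p fun _ : Fin n => ℝ => toLp 2 (ofLp x)) '' C) :=
    hconv.linear_image ((WithLp.linearEquiv 2 ℝ (Fin n → ℝ)).symm.toLinearMap ∘ₗ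
      (WithLp.linearEquiv p ℝ (Fin n → ℝ)).toLinearMap)
  obtain ⟨E, hE⟩ := exists_linearMap_extension_of_antilipschitzWith hTa hTb hTC ⟨0, h0⟩
  refine ⟨E, fun f K hf hf0 => ?_⟩
  obtain ⟨hext, hlip⟩ := hE f K hf
  refine ⟨hext, (hext ⟨0, h0⟩).trans hf0, fun x y => ?_⟩
  rw [← Real.dist_eq]
  calc dist (E f x) (E f y) ≤ (K * (b * a) : ℝ≥0) * dist x y := by
        rw [← mul_assoc]; exact hlip.dist_le_mul x y
    _ = K * (n : ℝ) ^ |1 / p.toReal - 1 / 2| * dist x y := by simp [hba]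
end

section
/- Let Y be a linear subspace of a finite-dimensional Banach space X, and suppose there exists a bounded linear extension operator E : Lip₀(Y) → Lip₀(X) (extending Lipschitz functions vanishing at 0 from Y to X with (Ef)|_Y = f). Then there exists a bounded linear projection P : X → Y onto Y with ‖P‖ ≤ ‖E‖. -/
/-!
Applying `E` to the coordinate functionals of a basis of `Y` gives a map `G : X → Y` with
`φ ∘ G = E φ` for every functional `φ` on `Y`, so `G` is a `c`-Lipschitz retraction onto `Y`.
Averaging `z ↦ G (x + z) - z` over `z ∈ Y` with a translation-invariant mean yields a `c`-Lipschitz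
`F : X → Y` with `F (x + y) = F x + y` for `y ∈ Y`. By Rademacher's theorem `F` is differentiable
at some point, and its derivative there is a projection onto `Y` of norm at most `c`.
-/

open MeasureTheory Filter Topology Metric Module

section Mean

variable {α V W : Type*} [NormedAddCommGroup W]

lemma Continuous.integrableOn_ball [MetricSpace α] [ProperSpace α] [MeasurableSpace α]
    [OpensMeasurableSpace α] {μ : Measure α} [IsFiniteMeasureOnCompacts μ] {φ : α → W}
    (hφ : Continuous φ) (x : α) (r : ℝ) : IntegrableOn φ (ball x r) μ :=
  (hφ.continuousOn.integrableOn_compact (isCompact_closedBall x r)).mono_set ball_subset_closedBall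

variable [NormedSpace ℝ W]

lemma norm_setAverage_le_of_norm_le [MeasurableSpace α] [Nonempty α] {μ : Measure α} {s : Set α}
    {φ : α → W} {B : ℝ} (hs : μ s ≠ ⊤) (hB : ∀ x, ‖φ x‖ ≤ B) : ‖⨍ x in s, φ x ∂μ‖ ≤ B := by
  have hB0 : 0 ≤ B := (norm_nonneg _).trans (hB (Classical.arbitrary α))
  rw [setAverage_eq, norm_smul, norm_inv, Real.norm_of_nonneg measureReal_nonneg]
  rcases eq_or_ne (μ.real s) 0 with h | h
  · simpa [h] using hB0
  · calc (μ.real s)⁻¹ * ‖∫ x in s, φ x ∂μ‖ ≤ (μ.real s)⁻¹ * (B * μ.real s) := by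
          gcongr; exact norm_setIntegral_le_of_norm_le_const hs.lt_top fun x _ => hB x
      _ = B := by field_simp

lemma norm_setIntegral_sub_setIntegral_le [MeasurableSpace α] {μ : Measure α} {s t : Set α}
    {φ : α → W} {B : ℝ} (hst : s ⊆ t) (hs : MeasurableSet s) (ht : μ t ≠ ⊤)
    (hφ : IntegrableOn φ t μ) (hB : ∀ x, ‖φ x‖ ≤ B) :
    ‖∫ x in t, φ x ∂μ - ∫ x in s, φ x ∂μ‖ ≤ B * (μ.real t - μ.real s) := by
  rw [← setIntegral_sdiff hs hφ hst, ← measureReal_sdiff hst hs ht]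
  exact norm_setIntegral_le_of_norm_le_const
    ((measure_mono Set.sdiff_subset).trans_lt ht.lt_top) fun x _ => hB x

lemma measureReal_ball_pos [PseudoMetricSpace α] [ProperSpace α] [MeasurableSpace α]
    (μ : Measure α) [μ.IsOpenPosMeasure] [IsFiniteMeasureOnCompacts μ] (x : α) {r : ℝ}
    (hr : 0 < r) : 0 < μ.real (ball x r) :=
  ENNReal.toReal_pos (measure_ball_pos μ x hr).ne' measure_ball_lt_top.ne

lemma setIntegral_ball_comp_add_right [NormedAddCommGroup α] [MeasurableSpace α] [MeasurableAdd α]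
    (μ : Measure α) [μ.IsAddRightInvariant] (φ : α → W) (v : α) (r : ℝ) :
    ∫ z in ball (0 : α) r, φ (z + v) ∂μ = ∫ z in ball v r, φ z ∂μ := by
  rw [← (measurePreserving_add_right μ v).setIntegral_preimage_emb
    (measurableEmbedding_addRight v) φ (ball v r), preimage_add_right_ball, sub_self]

variable [NormedAddCommGroup V] [MeasurableSpace V] (μ : Measure V)

/-- A limit, along a fixed ultrafilter finer than `atTop`, of the averages of `φ` over `ball 0 r`.
Balls form a Følner family, so on bounded continuous functions this is a translation-invariant
mean. -/
noncomputable def ballMean (φ : V → W) : W :=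
  limUnder (Ultrafilter.of (atTop : Filter ℝ) : Filter ℝ) fun r => ⨍ z in ball (0 : V) r, φ z ∂μ

variable [NormedSpace ℝ V] [FiniteDimensional ℝ V] [μ.IsAddHaarMeasure] {φ ψ : V → W} {B C : ℝ}

lemma tendsto_setAverage_ball_ballMean [ProperSpace W] (hB : ∀ z, ‖φ z‖ ≤ B) :
    Tendsto (fun r => ⨍ z in ball (0 : V) r, φ z ∂μ) (Ultrafilter.of (atTop : Filter ℝ))
      (𝓝 (ballMean μ φ)) := by
  refine tendsto_nhds_limUnder ?_
  obtain ⟨w, -, hw⟩ := (isCompact_closedBall (0 : W) B).ultrafilter_le_nhds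
    ((Ultrafilter.of atTop).map fun r => ⨍ z in ball (0 : V) r, φ z ∂μ) (by
      rw [Ultrafilter.coe_map, le_principal_iff]
      exact mem_map.2 (univ_mem' fun r => mem_closedBall_zero_iff.2
        (norm_setAverage_le_of_norm_le measure_ball_lt_top.ne hB)))
  exact ⟨w, by rwa [Ultrafilter.coe_map] at hw⟩

lemma norm_ballMean_le [ProperSpace W] (hB : ∀ z, ‖φ z‖ ≤ B) : ‖ballMean μ φ‖ ≤ B :=
  le_of_tendsto' (tendsto_setAverage_ball_ballMean μ hB).norm fun _ =>
    norm_setAverage_le_of_norm_le measure_ball_lt_top.ne hB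

variable [BorelSpace V]

lemma measureReal_ball_of_pos {r : ℝ} (hr : 0 < r) :
    μ.real (ball (0 : V) r) = r ^ finrank ℝ V * μ.real (ball (0 : V) 1) := by
  rw [measureReal_def, measureReal_def, Measure.addHaar_ball_of_pos μ _ hr, ENNReal.toReal_mul,
    ENNReal.toReal_ofReal (by positivity)]

lemma tendsto_measureReal_ball_add_div (a : ℝ) :
    Tendsto (fun r => μ.real (ball (0 : V) (r + a)) / μ.real (ball (0 : V) r)) atTop (𝓝 1) := by
  have hlim : Tendsto (fun r : ℝ => (1 + a / r) ^ finrank ℝ V) atTop (𝓝 1) := by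
    simpa using (((tendsto_const_nhds (x := a)).div_atTop (tendsto_id (α := ℝ))).const_add 1).pow
      (finrank ℝ V)
  refine hlim.congr' ?_
  filter_upwards [eventually_gt_atTop 0, eventually_gt_atTop (-a)] with r hr hra
  have hunit := measureReal_ball_pos μ (0 : V) one_pos
  rw [measureReal_ball_of_pos μ hr, measureReal_ball_of_pos μ (by linarith : 0 < r + a),
    one_add_div hr.ne', div_pow]
  field_simp

lemma norm_setAverage_ball_comp_add_sub_le (hφ : Continuous φ)
    (hB : ∀ z, ‖φ z‖ ≤ B) (v : V) {r : ℝ} (hr : 0 < r) :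
    ‖⨍ z in ball (0 : V) r, φ (z + v) ∂μ - ⨍ z in ball (0 : V) r, φ z ∂μ‖ ≤
      2 * B * (μ.real (ball (0 : V) (r + ‖v‖)) / μ.real (ball (0 : V) r) - 1) := by
  set m := μ.real (ball (0 : V) r)
  set R := ball (0 : V) (r + ‖v‖)
  have hm : 0 < m := measureReal_ball_pos μ 0 hr
  have hvR : ball v r ⊆ R := ball_subset_ball' (by rw [dist_zero_right])
  have h0R : ball (0 : V) r ⊆ R := ball_subset_ball (by linarith [norm_nonneg v])
  have hR := hφ.integrableOn_ball (μ := μ) 0 (r + ‖v‖)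
  have key : ‖∫ z in ball v r, φ z ∂μ - ∫ z in ball (0 : V) r, φ z ∂μ‖ ≤ 2 * B * (μ.real R - m) :=
    calc _ ≤ ‖∫ z in R, φ z ∂μ - ∫ z in ball v r, φ z ∂μ‖ +
          ‖∫ z in R, φ z ∂μ - ∫ z in ball (0 : V) r, φ z ∂μ‖ := by
          rw [norm_sub_rev (∫ z in R, φ z ∂μ)]; exact norm_sub_le_norm_sub_add_norm_sub _ _ _
      _ ≤ B * (μ.real R - μ.real (ball v r)) + B * (μ.real R - m) := add_le_add
          (norm_setIntegral_sub_setIntegral_le hvR measurableSet_ball measure_ball_lt_top.ne hR hB)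
          (norm_setIntegral_sub_setIntegral_le h0R measurableSet_ball measure_ball_lt_top.ne hR hB)
      _ = 2 * B * (μ.real R - m) := by rw [Measure.addHaar_real_ball_center μ v r]; ring
  rw [setAverage_eq, setAverage_eq, setIntegral_ball_comp_add_right, ← smul_sub, norm_smul,
    norm_inv, Real.norm_of_nonneg hm.le]
  calc m⁻¹ * ‖∫ z in ball v r, φ z ∂μ - ∫ z in ball (0 : V) r, φ z ∂μ‖
      ≤ m⁻¹ * (2 * B * (μ.real R - m)) := by gcongr
    _ = 2 * B * (μ.real R / m - 1) := by field_simp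

variable [ProperSpace W]

lemma ballMean_sub (hφ : Continuous φ) (hψ : Continuous ψ) (hφB : ∀ z, ‖φ z‖ ≤ B)
    (hψB : ∀ z, ‖ψ z‖ ≤ C) :
    ballMean μ (fun z => φ z - ψ z) = ballMean μ φ - ballMean μ ψ := by
  refine Tendsto.limUnder_eq ?_
  have h (r : ℝ) : ⨍ z in ball (0 : V) r, (φ z - ψ z) ∂μ =
      ⨍ z in ball (0 : V) r, φ z ∂μ - ⨍ z in ball (0 : V) r, ψ z ∂μ := by
    rw [setAverage_eq, setAverage_eq, setAverage_eq,
      integral_sub (hφ.integrableOn_ball 0 r) (hψ.integrableOn_ball 0 r), smul_sub]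
  simpa only [h] using
    (tendsto_setAverage_ball_ballMean μ hφB).sub (tendsto_setAverage_ball_ballMean μ hψB)

lemma ballMean_add_const (hφ : Continuous φ) (hB : ∀ z, ‖φ z‖ ≤ B) (w : W) :
    ballMean μ (fun z => φ z + w) = ballMean μ φ + w := by
  refine Tendsto.limUnder_eq (((tendsto_setAverage_ball_ballMean μ hB).add_const w).congr' ?_)
  filter_upwards [Ultrafilter.of_le atTop (eventually_gt_atTop 0)] with r hr
  rw [setAverage_eq, setAverage_eq, integral_add (hφ.integrableOn_ball 0 r) (integrableOn_const),
    setIntegral_const, smul_add, smul_smul, inv_mul_cancel₀ (measureReal_ball_pos μ 0 hr).ne',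
    one_smul]

lemma ballMean_comp_add_right (hφ : Continuous φ) (hB : ∀ z, ‖φ z‖ ≤ B) (v : V) :
    ballMean μ (fun z => φ (z + v)) = ballMean μ φ := by
  have hbound : Tendsto (fun r => 2 * B *
      (μ.real (ball (0 : V) (r + ‖v‖)) / μ.real (ball (0 : V) r) - 1)) atTop (𝓝 0) := by
    simpa using ((tendsto_measureReal_ball_add_div μ ‖v‖).sub_const 1).const_mul (2 * B)
  have hdiff : Tendsto (fun r => ⨍ z in ball (0 : V) r, φ (z + v) ∂μ -
      ⨍ z in ball (0 : V) r, φ z ∂μ) atTop (𝓝 0) :=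
    squeeze_zero_norm' ((eventually_gt_atTop 0).mono fun r hr =>
      norm_setAverage_ball_comp_add_sub_le μ hφ hB v hr) hbound
  refine Tendsto.limUnder_eq ?_
  simpa using (tendsto_setAverage_ball_ballMean μ hB).add (hdiff.mono_left (Ultrafilter.of_le _))

end Mean

lemma exists_dual_comp_eq {R M Z : Type*} [CommSemiring R] [AddCommMonoid M] [Module R M]
    [Module.Free R M] [Module.Finite R M] (E : (M → R) →ₗ[R] (Z → R)) :
    ∃ G : Z → M, ∀ φ : Module.Dual R M, ⇑φ ∘ G = E ⇑φ := by
  let b := Module.Free.chooseBasis R M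
  refine ⟨fun z => ∑ i, E (b.coord i) z • b i, fun φ => funext fun z => ?_⟩
  have hφ : ⇑φ = ∑ i, φ (b i) • ⇑(b.coord i) := by
    conv_lhs => rw [← b.sum_dual_apply_smul_coord φ]
    simp only [LinearMap.coe_sum, LinearMap.coe_smul]
  conv_rhs => rw [hφ]
  simp only [Function.comp_apply, map_sum, map_smul, smul_eq_mul, Finset.sum_apply, Pi.smul_apply,
    mul_comm]

lemma lipschitzWith_of_forall_strongDual {α F : Type*} [PseudoMetricSpace α] [NormedAddCommGroup F]
    [NormedSpace ℝ F] {G : α → F} {c : NNReal}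
    (h : ∀ φ : StrongDual ℝ F, LipschitzWith (c * ‖φ‖₊) (φ ∘ G)) : LipschitzWith c G := by
  refine LipschitzWith.of_dist_le_mul fun x x' => ?_
  rw [dist_eq_norm]
  refine NormedSpace.norm_le_dual_bound ℝ _ (by positivity) fun φ => ?_
  have := (h φ).dist_le_mul x x'
  rw [dist_eq_norm] at this
  simpa [map_sub, mul_right_comm] using this

section Projection

variable {X : Type*} [NormedAddCommGroup X] [NormedSpace ℝ X] (Y : Submodule ℝ X) {c : NNReal}

theorem exists_lipschitzWith_retraction_of_extension [FiniteDimensional ℝ Y]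
    (E : (Y → ℝ) →ₗ[ℝ] (X → ℝ))
    (hE : ∀ φ : StrongDual ℝ Y, (∀ y : Y, E φ y = φ y) ∧ LipschitzWith (c * ‖φ‖₊) (E φ)) :
    ∃ G : X → Y, LipschitzWith c G ∧ ∀ y : Y, G y = y := by
  obtain ⟨G, hG⟩ := exists_dual_comp_eq E
  have hGφ (φ : StrongDual ℝ Y) : ⇑φ ∘ G = E φ := hG φ.toLinearMap
  refine ⟨G, lipschitzWith_of_forall_strongDual fun φ => hGφ φ ▸ (hE φ).2, fun y => ?_⟩
  exact SeparatingDual.eq_iff_forall_dual_eq.2 fun φ => (congrFun (hGφ φ) y).trans ((hE φ).1 y)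

theorem exists_lipschitzWith_map_add_of_retraction [FiniteDimensional ℝ Y] {G : X → Y}
    (hG : LipschitzWith c G) (hGY : ∀ y : Y, G y = y) :
    ∃ F : X → Y, LipschitzWith c F ∧ ∀ x (y : Y), F (x + y) = F x + y := by
  borelize ↥Y
  let μ : Measure Y := Measure.addHaar
  let φ (x : X) (z : Y) : Y := G (x + z) - z
  have hφ (x : X) : Continuous (φ x) :=
    (hG.continuous.comp (continuous_const.add continuous_subtype_val)).sub continuous_id
  have hφB (x : X) (z : Y) : ‖φ x z‖ ≤ c * ‖x‖ := by
    simpa [φ, hGY, dist_eq_norm] using hG.dist_le_mul (x + z) z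
  refine ⟨fun x => ballMean μ (φ x), LipschitzWith.of_dist_le_mul fun x x' => ?_, fun x y => ?_⟩
  · rw [dist_eq_norm, dist_eq_norm, ← ballMean_sub μ (hφ x) (hφ x') (hφB x) (hφB x')]
    refine norm_ballMean_le μ fun z => ?_
    simpa [φ, dist_eq_norm] using hG.dist_le_mul (x + z) (x' + z)
  · have h : φ (x + y) = fun z => φ x (z + y) + y := funext fun z => by
      simp only [φ, Submodule.coe_add]
      rw [add_assoc, add_comm (y : X)]
      abel
    show ballMean μ (φ (x + y)) = ballMean μ (φ x) + y
    rw [h, ballMean_add_const μ (φ := fun z => φ x (z + y)) ((hφ x).comp (continuous_add_const y))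
      (fun z => hφB x (z + y)),
      ballMean_comp_add_right μ (hφ x) (hφB x)]

theorem exists_projection_of_lipschitzWith_map_add [FiniteDimensional ℝ X] {F : X → Y}
    (hF : LipschitzWith c F) (hFY : ∀ x (y : Y), F (x + y) = F x + y) :
    ∃ P : X →L[ℝ] X, (∀ x, P x ∈ Y) ∧ (∀ y ∈ Y, P y = y) ∧ ‖P‖ ≤ c := by
  borelize X
  obtain ⟨x₀, hx₀⟩ := (hF.ae_differentiableAt (μ := Measure.addHaar)).exists
  refine ⟨Y.subtypeL ∘L fderiv ℝ F x₀, fun x => (fderiv ℝ F x₀ x).2, fun y hy => ?_, ?_⟩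
  · have hline : (fun t : ℝ => F (x₀ + t • y)) = fun t => F x₀ + t • ⟨y, hy⟩ :=
      funext fun t => hFY x₀ (t • ⟨y, hy⟩)
    have hD : fderiv ℝ F x₀ y = ⟨y, hy⟩ := by
      rw [← hx₀.lineDeriv_eq_fderiv, lineDeriv, hline]
      exact (((hasDerivAt_id' 0).smul_const _).const_add _).deriv.trans (one_smul ℝ _)
    simp [hD]
  · calc ‖Y.subtypeL ∘L fderiv ℝ F x₀‖ ≤ ‖Y.subtypeL‖ * ‖fderiv ℝ F x₀‖ :=
          ContinuousLinearMap.opNorm_comp_le _ _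
      _ ≤ 1 * c := by
          gcongr
          · exact Submodule.norm_subtypeL_le Y
          · exact norm_fderiv_le_of_lipschitz ℝ hF
      _ = c := one_mul _

end Projection

/-- If `Y` is a linear subspace of a finite-dimensional Banach space `X` and there is a
bounded linear extension operator `E : Lip₀(Y) → Lip₀(X)` of norm at most `c` (i.e.
`(Ef)|_Y = f` and `Lip(Ef) ≤ c · Lip(f)`), then there is a bounded linear projection
`P : X → Y` onto `Y` with `‖P‖ ≤ c`. -/
theorem stmt_10 {X : Type*} [NormedAddCommGroup X] [NormedSpace ℝ X]
    [FiniteDimensional ℝ X] (Y : Submodule ℝ X)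
    (E : (↥Y → ℝ) →ₗ[ℝ] (X → ℝ)) (c : NNReal)
    (hE : ∀ (f : ↥Y → ℝ) (K : NNReal), LipschitzWith K f → f 0 = 0 →
      (∀ y : ↥Y, E f (y : X) = f y) ∧ LipschitzWith (c * K) (E f)) :
    ∃ P : X →L[ℝ] X, (∀ x : X, P x ∈ Y) ∧ (∀ y ∈ Y, P y = y) ∧ ‖P‖ ≤ c := by
  obtain ⟨G, hG, hGY⟩ := exists_lipschitzWith_retraction_of_extension Y E fun φ =>
    hE φ ‖φ‖₊ φ.lipschitz (map_zero φ)
  obtain ⟨F, hF, hFY⟩ := exists_lipschitzWith_map_add_of_retraction Y hG hGY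
  exact exists_projection_of_lipschitzWith_map_add Y hF hFY
end

section
/- Let {μ_m^i}_{m ∈ M_i} be families of Borel measures on metric spaces (M_i, d_i), 1 ≤ i ≤ N, each satisfying the uniform doubling condition μ_m(B_{2R}(m)) ≤ D_i μ_m(B_R(m)). On the p-direct sum M := ⊕_p M_i (with metric d(m,m') = (Σ d_i(m_i,m_i')^p)^{1/p}), the tensor-product measures μ_m := ⊗_{i=1}^N μ_{m_i}^i satisfy μ_m(B_{2R}(m)) ≤ (∏_{i=1}^N D_i) μ_m(B_R(m)) for all m ∈ M and R > 0. -/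
/-!
Balls need not be measurable here (the σ-algebras are not assumed Borel), so each distance
`d_i(m_i, ·)` is first replaced by a measurable minorant `hullRadius` whose sublevel sets have
the same mass as the balls. For sums of measurable coordinate functions, a comparison of
distribution functions in every coordinate tensorizes by Fubini, exchanging one coordinate at a
time; this gives the doubling inequality for the measurable sublevel sets of `∑ hullRadius^p`.
Finally such a sublevel set is covered, up to a null set, by countably many products of
measurable hulls of rational balls whose product lies in the `ℓ^p`-ball.
-/

open Set Function Filter Metric Finset
open scoped ENNReal

namespace MeasureTheory

theorem setOf_rpow_lt {α : Type*} {f : α → ℝ} (hf : ∀ x, 0 ≤ f x) {p t : ℝ} (hp : 0 < p)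
    (ht : 0 < t) :
    {x | f x ^ p < t} = {x | f x < t ^ p⁻¹} := by
  ext x
  exact (Real.lt_rpow_inv_iff_of_pos (hf x) ht.le hp).symm

section HullRadius

variable {α : Type*} [MeasurableSpace α] [PseudoMetricSpace α] (μ : Measure α) (m₀ : α)

/-- Intersecting over all larger radii makes the measurable hulls of the balls monotone. -/
def ballHull (q : ℚ) : Set α :=
  ⋂ (q' : ℚ) (_ : q ≤ q'), toMeasurable μ (ball m₀ q')

theorem measurableSet_ballHull (q : ℚ) : MeasurableSet (ballHull μ m₀ q) :=
  .iInter fun _ => .iInter fun _ => measurableSet_toMeasurable _ _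

theorem ballHull_mono : Monotone (ballHull μ m₀) := fun _ _ hqq' =>
  iInter₂_mono' fun q'' hq'' => ⟨q'', hqq'.trans hq'', subset_rfl⟩

theorem ball_subset_ballHull (q : ℚ) : ball m₀ q ⊆ ballHull μ m₀ q :=
  subset_iInter₂ fun _ hq' =>
    (ball_subset_ball (by exact_mod_cast hq')).trans (subset_toMeasurable μ _)

theorem ballHull_subset_toMeasurable (q : ℚ) :
    ballHull μ m₀ q ⊆ toMeasurable μ (ball m₀ q) :=
  iInter₂_subset q le_rfl

theorem measure_ballHull (q : ℚ) : μ (ballHull μ m₀ q) = μ (ball m₀ q) :=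
  le_antisymm ((measure_mono (ballHull_subset_toMeasurable μ m₀ q)).trans_eq
    (measure_toMeasurable _)) (measure_mono (ball_subset_ballHull μ m₀ q))

noncomputable def hullRadius (x : α) : ℝ :=
  sInf ((↑) '' {q : ℚ | 0 ≤ q ∧ x ∈ ballHull μ m₀ q})

theorem hullRadius_nonneg (x : α) : 0 ≤ hullRadius μ m₀ x :=
  Real.sInf_nonneg <| by rintro _ ⟨q, hq, rfl⟩; exact_mod_cast hq.1

theorem hullRadius_lt_iff {x : α} {r : ℝ} :
    hullRadius μ m₀ x < r ↔ ∃ q : ℚ, 0 ≤ q ∧ (q : ℝ) < r ∧ x ∈ ballHull μ m₀ q := by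
  have hne : ((↑) '' {q : ℚ | 0 ≤ q ∧ x ∈ ballHull μ m₀ q} : Set ℝ).Nonempty := by
    obtain ⟨q, hq⟩ := exists_rat_gt (dist x m₀)
    exact ⟨q, q, ⟨by exact_mod_cast dist_nonneg.trans hq.le, ball_subset_ballHull μ m₀ q hq⟩, rfl⟩
  have hbdd : BddBelow ((↑) '' {q : ℚ | 0 ≤ q ∧ x ∈ ballHull μ m₀ q} : Set ℝ) :=
    ⟨0, by rintro _ ⟨q, hq, rfl⟩; exact_mod_cast hq.1⟩
  constructor
  · intro h
    obtain ⟨_, ⟨q, ⟨hq0, hqx⟩, rfl⟩, hqr⟩ := exists_lt_of_csInf_lt hne h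
    exact ⟨q, hq0, hqr, hqx⟩
  · rintro ⟨q, hq0, hqr, hqx⟩
    exact (csInf_le hbdd ⟨q, ⟨hq0, hqx⟩, rfl⟩).trans_lt hqr

theorem hullRadius_le_dist (x : α) : hullRadius μ m₀ x ≤ dist x m₀ := by
  refine le_of_forall_gt fun r hr => ?_
  obtain ⟨q, hxq, hqr⟩ := exists_rat_btwn hr
  exact (hullRadius_lt_iff μ m₀).2
    ⟨q, by exact_mod_cast dist_nonneg.trans hxq.le, hqr, ball_subset_ballHull μ m₀ q hxq⟩

theorem setOf_hullRadius_lt (r : ℝ) :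
    {x | hullRadius μ m₀ x < r} = ⋃ q : {q : ℚ // 0 ≤ q ∧ (q : ℝ) < r}, ballHull μ m₀ q := by
  ext x
  simp only [mem_ofPred_eq, hullRadius_lt_iff, mem_iUnion, Subtype.exists]
  grind

theorem measurable_hullRadius : Measurable (hullRadius μ m₀) :=
  measurable_of_Iio fun r => by
    rw [show hullRadius μ m₀ ⁻¹' Iio r = _ from setOf_hullRadius_lt μ m₀ r]
    exact .iUnion fun q => measurableSet_ballHull μ m₀ q

theorem measure_setOf_hullRadius_lt (r : ℝ) :
    μ {x | hullRadius μ m₀ x < r} = μ (ball m₀ r) := by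
  refine le_antisymm ?_ (measure_mono fun x hx => (hullRadius_le_dist μ m₀ x).trans_lt hx)
  have hdir : Directed (· ⊆ ·) fun q : {q : ℚ // 0 ≤ q ∧ (q : ℝ) < r} => ballHull μ m₀ q :=
    fun q q' => ⟨⟨max q q', le_max_of_le_left q.2.1, by push_cast; exact max_lt q.2.2 q'.2.2⟩,
      ballHull_mono μ m₀ (le_max_left _ _), ballHull_mono μ m₀ (le_max_right _ _)⟩
  rw [setOf_hullRadius_lt, hdir.measure_iUnion]
  exact iSup_le fun q =>
    (measure_ballHull μ m₀ q).trans_le (measure_mono (ball_subset_ball q.2.2.le))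

theorem measure_setOf_hullRadius_rpow_lt_le {D : ℝ≥0∞}
    (hD : ∀ R : ℝ, 0 < R → μ (ball m₀ (2 * R)) ≤ D * μ (ball m₀ R)) {p : ℝ} (hp : 0 < p)
    (t : ℝ) :
    μ {x | hullRadius μ m₀ x ^ p < t} ≤ D * μ {x | (2 * hullRadius μ m₀ x) ^ p < t} := by
  rcases le_or_gt t 0 with ht | ht
  · have hempty : {x | hullRadius μ m₀ x ^ p < t} = ∅ :=
      eq_empty_of_forall_notMem fun x hx =>
        (Real.rpow_nonneg (hullRadius_nonneg μ m₀ x) p).not_gt (hx.trans_le ht)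
    simp [hempty]
  set r := t ^ p⁻¹
  have hhalf : {x | (2 * hullRadius μ m₀ x) ^ p < t} = {x | hullRadius μ m₀ x < r / 2} := by
    rw [setOf_rpow_lt (fun x => mul_nonneg zero_le_two (hullRadius_nonneg μ m₀ x)) hp ht]
    ext x
    simp only [mem_ofPred_eq]
    constructor <;> intro h <;> linarith
  rw [setOf_rpow_lt (hullRadius_nonneg μ m₀) hp ht, hhalf, measure_setOf_hullRadius_lt,
    measure_setOf_hullRadius_lt]
  have hdoubling := hD (r / 2) (by positivity)
  rwa [show 2 * (r / 2) = r by ring] at hdoubling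

end HullRadius

theorem lintegral_eq_zero_of_support_subset_toMeasurable_diff {α : Type*} [MeasurableSpace α]
    {μ : Measure α} [SFinite μ] {f : α → ℝ≥0∞} (hf : Measurable f) {s : Set α}
    (h : support f ⊆ toMeasurable μ s \ s) : ∫⁻ y, f y ∂μ = 0 := by
  rw [lintegral_eq_zero_iff hf]
  change μ (support f) = 0
  have hdisj : s ∩ support f = ∅ :=
    disjoint_iff_inter_eq_empty.mp (disjoint_left.mpr fun _ hys hy => (h hy).2 hys)
  rw [← inter_eq_right.mpr fun _ hy => (h hy).1,
    Measure.measure_toMeasurable_inter_of_sFinite (measurableSet_support hf), hdisj,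
    measure_empty]

theorem exists_pos_sum_rpow_add_lt {ι : Type*} [Fintype ι] {u : ι → ℝ} {p c : ℝ} (hp : 0 < p)
    (h : ∑ i, u i ^ p < c) : ∃ δ > 0, ∑ i, (u i + δ) ^ p < c := by
  have hcont : Continuous fun δ : ℝ => ∑ i, (u i + δ) ^ p :=
    continuous_finsetSum _ fun i _ =>
      (Real.continuous_rpow_const hp.le).comp (continuous_const.add continuous_id)
  have hev : ∀ᶠ δ in nhds (0 : ℝ), ∑ i, (u i + δ) ^ p < c :=
    (hcont.tendsto 0).eventually_lt_const (by simpa using h)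
  obtain ⟨δ, hδc, hδ⟩ := ((hev.filter_mono nhdsWithin_le_nhds).and
    (self_mem_nhdsWithin : Ioi (0 : ℝ) ∈ nhdsWithin 0 (Ioi 0))).exists
  exact ⟨δ, hδ, hδc⟩

section Pi

variable {ι : Type*} [Fintype ι] {M : ι → Type*} [∀ i, MeasurableSpace (M i)]
  (μ : ∀ i, Measure (M i)) [∀ i, SigmaFinite (μ i)]

theorem lintegral_pi_le_of_lintegral_update_le [DecidableEq ι] (j : ι) {f g : (∀ i, M i) → ℝ≥0∞}
    (hf : Measurable f) (hg : Measurable g) {c : ℝ≥0∞}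
    (h : ∀ x, ∫⁻ y, f (update x j y) ∂μ j ≤ c * ∫⁻ y, g (update x j y) ∂μ j) :
    ∫⁻ x, f x ∂Measure.pi μ ≤ c * ∫⁻ x, g x ∂Measure.pi μ := by
  rw [← lintegral_const_mul c hg]
  refine lintegral_le_of_lmarginal_le {j} hf (hg.const_mul c) ?_
  rw [lmarginal_singleton, lmarginal_singleton]
  intro x
  show ∫⁻ y, f (update x j y) ∂μ j ≤ ∫⁻ y, c * g (update x j y) ∂μ j
  rw [lintegral_const_mul (f := fun y => g (update x j y)) c (hg.comp (measurable_update x))]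
  exact h x

theorem measure_pi_setOf_add_lt_le [DecidableEq ι] (j : ι) {a b : M j → ℝ} (ha : Measurable a)
    (hb : Measurable b) {K : (∀ i, M i) → ℝ} (hK : Measurable K)
    (hKj : ∀ x y, K (update x j y) = K x) {D : ℝ≥0∞}
    (hab : ∀ t, μ j {y | a y < t} ≤ D * μ j {y | b y < t}) (c : ℝ) :
    Measure.pi μ {x | a (x j) + K x < c} ≤ D * Measure.pi μ {x | b (x j) + K x < c} := by
  have hmeas : ∀ {f : M j → ℝ}, Measurable f →
      MeasurableSet {x : ∀ i, M i | f (x j) + K x < c} := fun hf =>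
    measurableSet_lt ((hf.comp (measurable_pi_apply j)).add hK) measurable_const
  have hslice : ∀ {f : M j → ℝ}, Measurable f → ∀ x,
      ∫⁻ y, {x' : ∀ i, M i | f (x' j) + K x' < c}.indicator 1 (update x j y) ∂μ j =
        μ j {y | f y < c - K x} := by
    intro f hf x
    have hpre : update x j ⁻¹' {x' | f (x' j) + K x' < c} = {y | f y < c - K x} := by
      ext y
      simp [hKj, lt_sub_iff_add_lt]
    rw [← hpre, ← lintegral_indicator_one (measurable_update x (hmeas hf))]
    rfl
  rw [← lintegral_indicator_one (hmeas ha), ← lintegral_indicator_one (hmeas hb)]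
  refine lintegral_pi_le_of_lintegral_update_le μ j (measurable_one.indicator (hmeas ha))
    (measurable_one.indicator (hmeas hb)) fun x => ?_
  rw [hslice ha, hslice hb]
  exact hab _

theorem measure_pi_setOf_sum_lt_le {a b : ∀ i, M i → ℝ} (ha : ∀ i, Measurable (a i))
    (hb : ∀ i, Measurable (b i)) {D : ι → ℝ≥0∞}
    (hab : ∀ i t, μ i {y | a i y < t} ≤ D i * μ i {y | b i y < t}) (c : ℝ) :
    Measure.pi μ {x | ∑ i, a i (x i) < c} ≤
      (∏ i, D i) * Measure.pi μ {x | ∑ i, b i (x i) < c} := by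
  classical
  suffices h : ∀ S : Finset ι, Measure.pi μ {x | ∑ i, S.piecewise a b i (x i) < c} ≤
      (∏ i ∈ S, D i) * Measure.pi μ {x | ∑ i, b i (x i) < c} by
    simpa using h univ
  intro S
  induction S using Finset.induction_on with
  | empty => simp
  | insert j S hj IH =>
    have hsplit : ∀ (T : Finset ι) (x : ∀ i, M i), ∑ i, T.piecewise a b i (x i) =
        T.piecewise a b j (x j) + ∑ i ∈ univ.erase j, T.piecewise a b i (x i) :=
      fun T x => (add_sum_erase _ _ (mem_univ j)).symm
    set K := fun x : ∀ i, M i => ∑ i ∈ univ.erase j, S.piecewise a b i (x i)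
    have hK : ∀ x, ∑ i ∈ univ.erase j, (insert j S).piecewise a b i (x i) = K x := fun x =>
      sum_congr rfl fun i hi => by rw [Finset.piecewise_insert_of_ne _ _ _ (ne_of_mem_erase hi)]
    have hpw : ∀ i, Measurable (S.piecewise a b i) := fun i => by
      by_cases hi : i ∈ S
      · rw [Finset.piecewise_eq_of_mem _ _ _ hi]; exact ha i
      · rw [Finset.piecewise_eq_of_notMem _ _ _ hi]; exact hb i
    have hKmeas : Measurable K :=
      Finset.measurable_sum _ fun i _ => (hpw i).comp (measurable_pi_apply i)
    have hKj : ∀ x y, K (update x j y) = K x := fun x y =>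
      sum_congr rfl fun i hi => by rw [update_of_ne (ne_of_mem_erase hi)]
    calc Measure.pi μ {x | ∑ i, (insert j S).piecewise a b i (x i) < c}
        = Measure.pi μ {x | a j (x j) + K x < c} := by
          simp_rw [hsplit (insert j S), hK, Finset.piecewise_insert_self]
      _ ≤ D j * Measure.pi μ {x | b j (x j) + K x < c} :=
          measure_pi_setOf_add_lt_le μ j (ha j) (hb j) hKmeas hKj (hab j) c
      _ = D j * Measure.pi μ {x | ∑ i, S.piecewise a b i (x i) < c} := by
          simp_rw [hsplit S, Finset.piecewise_eq_of_notMem _ _ _ hj, K]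
      _ ≤ D j * ((∏ i ∈ S, D i) * Measure.pi μ {x | ∑ i, b i (x i) < c}) := by gcongr
      _ = (∏ i ∈ insert j S, D i) * Measure.pi μ {x | ∑ i, b i (x i) < c} := by
          rw [prod_insert hj, mul_assoc]

theorem lmarginal_indicator_pi_toMeasurable_diff_eq_zero [DecidableEq ι] (s : ∀ i, Set (M i))
    {T : Set (∀ i, M i)} (hT : MeasurableSet T) (hsT : univ.pi s ⊆ T) (S : Finset ι)
    {x : ∀ i, M i} (hx : ∀ i ∉ S, x i ∈ s i) :
    (∫⋯∫⁻_S, (univ.pi (fun i => toMeasurable (μ i) (s i)) \ T).indicator 1 ∂μ) x = 0 := by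
  set P := univ.pi (fun i => toMeasurable (μ i) (s i)) \ T
  have hP : Measurable (P.indicator (1 : (∀ i, M i) → ℝ≥0∞)) :=
    measurable_one.indicator
      ((MeasurableSet.univ_pi fun i => measurableSet_toMeasurable _ _).diff hT)
  induction S using Finset.induction_on generalizing x with
  | empty =>
    rw [lmarginal_empty]
    exact indicator_of_notMem (fun hxP => hxP.2 (hsT fun i _ => hx i (notMem_empty i))) _
  | insert j S hj IH =>
    rw [lmarginal_insert _ hP hj]
    refine lintegral_eq_zero_of_support_subset_toMeasurable_diff (s := s j)
      ((hP.lmarginal μ).comp (measurable_update x)) fun y hy => ⟨?_, fun hys => hy ?_⟩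
    · by_contra hy'
      refine hy ?_
      dsimp only
      rw [lmarginal_update_of_notMem hP hj]
      have hzero : P.indicator 1 ∘ (update · j y) = (0 : (∀ i, M i) → ℝ≥0∞) := funext fun z =>
        indicator_of_notMem (fun hz => hy' (by simpa using hz.1 j (mem_univ j))) _
      rw [hzero]
      simp [lmarginal]
    · refine IH fun i hi => ?_
      rcases eq_or_ne i j with rfl | hij
      · simpa using hys
      · simpa [hij] using hx i (by simp [hij, hi])

theorem measure_pi_toMeasurable_diff_eq_zero (s : ∀ i, Set (M i)) {T : Set (∀ i, M i)}
    (hT : MeasurableSet T) (hsT : univ.pi s ⊆ T) :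
    Measure.pi μ (univ.pi (fun i => toMeasurable (μ i) (s i)) \ T) = 0 := by
  classical
  rw [← lintegral_indicator_one
    ((MeasurableSet.univ_pi fun i => measurableSet_toMeasurable _ _).diff hT)]
  rcases isEmpty_or_nonempty (∀ i, M i) with h | ⟨⟨x₀⟩⟩
  · exact lintegral_of_isEmpty _ _
  rw [lintegral_eq_lmarginal_univ x₀]
  exact lmarginal_indicator_pi_toMeasurable_diff_eq_zero μ s hT hsT univ (by simp)

theorem measure_pi_le_of_subset_iUnion_pi_toMeasurable {κ : Type*} [Countable κ]
    (s : κ → ∀ i, Set (M i)) {A B : Set (∀ i, M i)} (hsB : ∀ k, univ.pi (s k) ⊆ B)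
    (hA : A ⊆ ⋃ k, univ.pi fun i => toMeasurable (μ i) (s k i)) :
    Measure.pi μ A ≤ Measure.pi μ B := by
  set T := toMeasurable (Measure.pi μ) B
  have hnull : Measure.pi μ (A \ T) = 0 := by
    refine measure_mono_null (fun x hx => ?_) (measure_iUnion_null fun k =>
      measure_pi_toMeasurable_diff_eq_zero μ (s k) (measurableSet_toMeasurable (Measure.pi μ) B)
        ((hsB k).trans (subset_toMeasurable (Measure.pi μ) B)))
    obtain ⟨k, hk⟩ := mem_iUnion.mp (hA hx.1)
    exact mem_iUnion.mpr ⟨k, hk, hx.2⟩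
  exact (measure_mono_ae (ae_le_set.mpr hnull)).trans_eq (measure_toMeasurable B)

end Pi

section LpBall

variable {ι : Type*} [Fintype ι] {M : ι → Type*} [∀ i, PseudoMetricSpace (M i)]

def lpBall (p : ℝ) (m : ∀ i, M i) (R : ℝ) : Set (∀ i, M i) :=
  {m' | ∑ i, dist (m i) (m' i) ^ p < R ^ p}

variable [∀ i, MeasurableSpace (M i)] (μ : ∀ i, Measure (M i)) [∀ i, SigmaFinite (μ i)]
  (m : ∀ i, M i) {p : ℝ}

theorem measure_pi_setOf_sum_hullRadius_rpow_lt_le (hp : 0 < p) (R : ℝ) :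
    Measure.pi μ {x | ∑ i, hullRadius (μ i) (m i) (x i) ^ p < R ^ p} ≤
      Measure.pi μ (lpBall p m R) := by
  refine measure_pi_le_of_subset_iUnion_pi_toMeasurable μ
    (κ := {q : ι → ℚ // (∀ i, 0 ≤ q i) ∧ ∑ i, (q i : ℝ) ^ p < R ^ p})
    (fun q i => ball (m i) (q.1 i)) (fun q x hx => ?_) fun x hx => ?_
  · refine (sum_le_sum fun i _ => ?_).trans_lt q.2.2
    rw [dist_comm]
    exact Real.rpow_le_rpow dist_nonneg (mem_ball.mp (hx i (mem_univ i))).le hp.le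
  · obtain ⟨δ, hδ, hsum⟩ := exists_pos_sum_rpow_add_lt hp hx
    choose q hq0 hqlt hqx using fun i =>
      (hullRadius_lt_iff (μ i) (m i)).1 (lt_add_of_pos_right (hullRadius (μ i) (m i) (x i)) hδ)
    have hqsum : ∑ i, (q i : ℝ) ^ p < R ^ p :=
      (sum_le_sum fun i _ => Real.rpow_le_rpow (by exact_mod_cast hq0 i) (hqlt i).le hp.le).trans_lt
        hsum
    exact mem_iUnion.mpr ⟨⟨q, fun i => by exact_mod_cast hq0 i, hqsum⟩,
      fun i _ => ballHull_subset_toMeasurable (μ i) (m i) (q i) (hqx i)⟩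

theorem measure_pi_lpBall_two_mul_le {D : ι → ℝ≥0∞}
    (hD : ∀ i (R : ℝ), 0 < R → μ i (ball (m i) (2 * R)) ≤ D i * μ i (ball (m i) R))
    (hp : 0 < p) {R : ℝ} (hR : 0 < R) :
    Measure.pi μ (lpBall p m (2 * R)) ≤ (∏ i, D i) * Measure.pi μ (lpBall p m R) := by
  set g := fun i => hullRadius (μ i) (m i)
  have hg : ∀ i, Measurable (g i) := fun i => measurable_hullRadius (μ i) (m i)
  have hrescale : {x : ∀ i, M i | ∑ i, (2 * g i (x i)) ^ p < (2 * R) ^ p} =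
      {x | ∑ i, g i (x i) ^ p < R ^ p} := by
    ext x
    simp only [mem_ofPred_eq, Real.mul_rpow zero_le_two (hullRadius_nonneg _ _ _),
      Real.mul_rpow zero_le_two hR.le, ← mul_sum, g]
    exact mul_lt_mul_iff_right₀ (Real.rpow_pos_of_pos two_pos p)
  calc Measure.pi μ (lpBall p m (2 * R))
      ≤ Measure.pi μ {x | ∑ i, g i (x i) ^ p < (2 * R) ^ p} :=
        measure_mono fun x hx => (sum_le_sum fun i _ => Real.rpow_le_rpow
          (hullRadius_nonneg _ _ _) ((hullRadius_le_dist _ _ _).trans_eq (dist_comm _ _))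
          hp.le).trans_lt hx
    _ ≤ (∏ i, D i) * Measure.pi μ {x | ∑ i, (2 * g i (x i)) ^ p < (2 * R) ^ p} :=
        measure_pi_setOf_sum_lt_le μ (fun i => (hg i).pow_const p)
          (fun i => ((hg i).const_mul 2).pow_const p)
          (fun i => measure_setOf_hullRadius_rpow_lt_le (μ i) (m i) (hD i) hp) _
    _ ≤ (∏ i, D i) * Measure.pi μ (lpBall p m R) := by
        rw [hrescale]
        exact mul_le_mul_right (measure_pi_setOf_sum_hullRadius_rpow_lt_le μ m hp R) _

end LpBall

end MeasureTheory

open MeasureTheory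

/-- If each family `{μ_m^i}` on `(M_i, d_i)` is uniformly doubling with constant `D_i`,
then on the `p`-direct sum (with balls `B_R(m) = {m' : ∑ d_i(m_i,m_i')^p < R^p}`) the
tensor-product measures `μ_m = ⊗_i μ_{m_i}^i` are uniformly doubling with constant
`∏_i D_i`. -/
theorem stmt_15 {N : ℕ} (p : ℝ) (hp : 1 ≤ p)
    (M : Fin N → Type*) [∀ i, MeasurableSpace (M i)] [∀ i, MetricSpace (M i)]
    (μ : ∀ i, M i → Measure (M i)) [∀ i m, SigmaFinite (μ i m)]
    (D : Fin N → ENNReal)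
    (hD : ∀ (i : Fin N) (m : M i) (R : ℝ), 0 < R →
      μ i m (Metric.ball m (2 * R)) ≤ D i * μ i m (Metric.ball m R)) :
    ∀ (m : ∀ i, M i) (R : ℝ), 0 < R →
      Measure.pi (fun i => μ i (m i))
          {m' : ∀ i, M i | ∑ i, dist (m i) (m' i) ^ p < (2 * R) ^ p} ≤
        (∏ i, D i) *
          Measure.pi (fun i => μ i (m i))
            {m' : ∀ i, M i | ∑ i, dist (m i) (m' i) ^ p < R ^ p} := fun m _ hR =>
  measure_pi_lpBall_two_mul_le (fun i => μ i (m i)) m (fun i => hD i (m i))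
    (zero_lt_one.trans_le hp) hR
end
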